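/- Let X be a finite n-dimensional simplicial complex satisfying condition (1_X), let 1 ≤ i ≤ n−1, and let λ ∈ ℝ be such that (Δ_u g, g)_u ≤ λ·(g, g)_u for every vertex u of X and every g ∈ C^{i−1}(Lk(u)). Then for every f ∈ C^i(X) and every vertex v of X, (Δρ_v f, ρ_v f) ≤ λ·(ρ_v f, f). -/

import Mathlib

open Finset

open scoped Classical

variable {V : Type*}

/-- A (finite) simplicial complex on the vertex type `V`: a collection of nonempty
finite sets of vertices (the simplices) closed under passing to nonempty subsets. -/
def IsComplex [DecidableEq V] (K : Finset (Finset V)) : Prop :=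
  (∀ s ∈ K, s.Nonempty) ∧ ∀ s ∈ K, ∀ t : Finset V, t ⊆ s → t.Nonempty → t ∈ K

/-- `K` is `n`-dimensional and satisfies condition `(1_X)`: every simplex has dimension
at most `n` and is a face of some `n`-dimensional simplex (one of cardinality `n+1`). -/
def IsPureDim [DecidableEq V] (K : Finset (Finset V)) (n : ℕ) : Prop :=
  (∀ s ∈ K, s.card ≤ n + 1) ∧ ∀ s ∈ K, ∃ t ∈ K, s ⊆ t ∧ t.card = n + 1

/-- `wt K n s` : the number `w(s)` of `n`-dimensional simplices of `K` containing `s`. -/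
noncomputable def wt [DecidableEq V] (K : Finset (Finset V)) (n : ℕ) (s : Finset V) : ℕ :=
  (K.filter fun t => s ⊆ t ∧ t.card = n + 1).card

/-- An `m`-tuple of vertices is allowed when its entries are distinct and form a simplex
of `K`; i.e. it is an oriented `(m-1)`-simplex of `K`. -/
def Allowed [DecidableEq V] [Fintype V] (K : Finset (Finset V)) {m : ℕ}
    (v : Fin m → V) : Prop :=
  Function.Injective v ∧ Finset.image v Finset.univ ∈ K

/-- `f` is an `(m-1)`-cochain on `K`: a real-valued alternating function on oriented
`(m-1)`-simplices of `K` (realized as a function on all `m`-tuples of vertices which is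
alternating and vanishes on tuples which are not oriented simplices of `K`). -/
def IsCochain [DecidableEq V] [Fintype V] (K : Finset (Finset V)) (m : ℕ)
    (f : (Fin m → V) → ℝ) : Prop :=
  (∀ (σ : Equiv.Perm (Fin m)) (v : Fin m → V),
      f (v ∘ σ) = ((Equiv.Perm.sign σ : ℤ) : ℝ) * f v) ∧
  ∀ v : Fin m → V, ¬ Allowed K v → f v = 0

/-- The inner product `(f,g) = ∑_s w(s)·f(s)·g(s)` on `(m-1)`-cochains, the sum being over
the unoriented `(m-1)`-simplices `s` of `K` (each with an arbitrarily chosen orientation);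
summing over all `m`-tuples counts each simplex `m!` times, whence the normalization. -/
noncomputable def innerC [DecidableEq V] [Fintype V] (K : Finset (Finset V)) (n m : ℕ)
    (f g : (Fin m → V) → ℝ) : ℝ :=
  (∑ v : Fin m → V, (wt K n (Finset.image v Finset.univ) : ℝ) * f v * g v) /
    (Nat.factorial m : ℝ)

/-- The coboundary `d : C^{m-1}(K) → C^m(K)`. -/
noncomputable def cobound [DecidableEq V] [Fintype V] (K : Finset (Finset V)) {m : ℕ}
    (f : (Fin m → V) → ℝ) : (Fin (m + 1) → V) → ℝ :=
  fun v => if Allowed K v then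
    ∑ j : Fin (m + 1), (-1 : ℝ) ^ (j : ℕ) * f (v ∘ Fin.succAbove j)
  else 0

/-- The operator `δ : C^m(K) → C^{m-1}(K)`,
`(δf)(s) = ∑_x (w([x,s])/w(s))·f([x,s])`, the sum being over the vertices `x`
such that `[x,s]` is an oriented simplex of `K`. -/
noncomputable def codiff [DecidableEq V] [Fintype V] (K : Finset (Finset V)) (n : ℕ) {m : ℕ}
    (f : (Fin (m + 1) → V) → ℝ) : (Fin m → V) → ℝ :=
  fun s => ∑ x : V,
    if Allowed K (Fin.cons x s) then
      ((wt K n (Finset.image (Fin.cons x s) Finset.univ) : ℝ) /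
          (wt K n (Finset.image s Finset.univ) : ℝ)) * f (Fin.cons x s)
    else 0

/-- The Laplace operator `Δ = δ ∘ d` on `(m-1)`-cochains. -/
noncomputable def lap [DecidableEq V] [Fintype V] (K : Finset (Finset V)) (n : ℕ) {m : ℕ}
    (f : (Fin m → V) → ℝ) : (Fin m → V) → ℝ :=
  codiff K n (cobound K f)

/-- `ρ_v : C^{m-1}(K) → C^{m-1}(K)`: `(ρ_v f)(s) = f(s)` if `v` is a vertex of `s`,
and `0` otherwise. -/
noncomputable def rho [DecidableEq V] {m : ℕ} (v : V) (f : (Fin m → V) → ℝ) :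
    (Fin m → V) → ℝ :=
  fun s => if ∃ j, s j = v then f s else 0

/-- The vertices of `K`. -/
noncomputable def verts [DecidableEq V] [Fintype V] (K : Finset (Finset V)) : Finset V :=
  Finset.univ.filter fun v => {v} ∈ K

/-- The link `Lk(v)` of a vertex `v`: all simplices `s` of `K` with `v ∉ s` and
`s ∪ {v} ∈ K`. -/
noncomputable def linkK [DecidableEq V] (K : Finset (Finset V)) (v : V) :
    Finset (Finset V) :=
  K.filter fun s => v ∉ s ∧ insert v s ∈ K

/-- `τ_v : C^{m}(K) → C^{m-1}(Lk(v))`: `(τ_v f)(s) = f([v,s])` for `s` an oriented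
simplex of the link `Lk(v)`. -/
noncomputable def tau [DecidableEq V] [Fintype V] (K : Finset (Finset V)) (v : V) {m : ℕ}
    (f : (Fin (m + 1) → V) → ℝ) : (Fin m → V) → ℝ :=
  fun s => if Allowed (linkK K v) s then f (Fin.cons v s) else 0

/-- `c` is an eigenvalue of the Laplace operator acting on `(m-1)`-cochains of `K`. -/
def IsEigen [DecidableEq V] [Fintype V] (K : Finset (Finset V)) (n m : ℕ) (c : ℝ) : Prop :=
  ∃ f : (Fin m → V) → ℝ, f ≠ 0 ∧ IsCochain K m f ∧ lap K n f = c • f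

/-!
The vertex `v` localizes both sides to the link. Writing `τ_v f` for `s ↦ f([v,s])`, the
`n`-simplices containing `[v,s]` are exactly the cones over the `(n-1)`-simplices of `Lk(v)`
containing `s`, so `w([v,s]) = w_v(s)`; and in `d(ρ_v f)[x,v,s]` the face `[x,s]` misses `v`,
while the faces `[x,v,s']` agree with the faces `[v,x,s']` of the link coboundary up to the sign
of the swap. Hence `Δρ_v f` agrees with `Δ_v τ_v f` at `[v,s]`, and counting each oriented
simplex through `v` once per position of `v` gives `(Δρ_v f, ρ_v f) = (Δ_v τ_v f, τ_v f)_v` and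
`(ρ_v f, f) = (τ_v f, τ_v f)_v`. The hypothesis at `u = v`, `g = τ_v f` is then the claim.
-/

section Tuples
variable {m : ℕ}

lemma cons_comp_decomposeFin_symm_zero {m : ℕ} (x : V) (s : Fin m → V)
    (σ : Equiv.Perm (Fin m)) :
    Fin.cons x s ∘ Equiv.Perm.decomposeFin.symm (0, σ) = Fin.cons x (s ∘ σ) := by
  ext k
  cases k using Fin.cases <;> simp [Equiv.Perm.decomposeFin_symm_apply_succ]

lemma sign_decomposeFin_symm_zero {m : ℕ} (σ : Equiv.Perm (Fin m)) :
    Equiv.Perm.sign (Equiv.Perm.decomposeFin.symm (0, σ)) = Equiv.Perm.sign σ := by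
  simp [Equiv.Perm.decomposeFin.symm_sign]

lemma cons_cons_comp_swap {m : ℕ} (a b : V) (s : Fin m → V) :
    Fin.cons a (Fin.cons b s) ∘ Equiv.swap (0 : Fin (m + 2)) 1 = Fin.cons b (Fin.cons a s) := by
  ext k
  rcases Fin.eq_zero_or_eq_succ k with rfl | ⟨k, rfl⟩
  · simp
  rcases Fin.eq_zero_or_eq_succ k with rfl | ⟨k, rfl⟩
  · simp
  · have hk : k.succ.succ ≠ 1 := by simp [Fin.ext_iff]
    simp [Equiv.swap_apply_of_ne_of_ne (Fin.succ_ne_zero _) hk]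

lemma image_univ_comp_perm [DecidableEq V] (σ : Equiv.Perm (Fin m)) (t : Fin m → V) :
    image (t ∘ σ) univ = image t univ := by
  rw [← image_image, image_univ_equiv]

lemma image_univ_cons [DecidableEq V] (x : V) (s : Fin m → V) :
    image (Fin.cons x s) univ = insert x (image s univ) := by
  ext a
  simp [Fin.exists_fin_succ, eq_comm]

end Tuples

lemma Int.cast_units_mul_self {R : Type*} [Ring R] (u : ℤˣ) : ((u : ℤ) : R) * (u : ℤ) = 1 := by
  rw [← Int.cast_mul, ← Units.val_mul, Int.units_mul_self, Units.val_one, Int.cast_one]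

section Alternating
variable {m : ℕ}

def IsAlternating (h : (Fin m → V) → ℝ) : Prop :=
  ∀ (σ : Equiv.Perm (Fin m)) (w : Fin m → V), h (w ∘ σ) = ((Equiv.Perm.sign σ : ℤ) : ℝ) * h w

namespace IsAlternating

variable {h : (Fin m → V) → ℝ}

lemma mul_comp_perm (hh : IsAlternating h) {g : (Fin m → V) → ℝ} (hg : IsAlternating g)
    (σ : Equiv.Perm (Fin m)) (w : Fin m → V) : h (w ∘ σ) * g (w ∘ σ) = h w * g w := by
  rw [hh, hg]
  linear_combination (h w * g w) * Int.cast_units_mul_self (R := ℝ) (Equiv.Perm.sign σ)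

lemma apply_cons_cons_swap {h : (Fin (m + 2) → V) → ℝ} (hh : IsAlternating h)
    (a b : V) (s : Fin m → V) :
    h (Fin.cons a (Fin.cons b s)) = -h (Fin.cons b (Fin.cons a s)) := by
  rw [← cons_cons_comp_swap b a, hh, Equiv.Perm.sign_swap (by simp)]
  simp

end IsAlternating

noncomputable def succAbovePerm (p : Fin (m + 1) × Equiv.Perm (Fin m)) :
    Equiv.Perm (Fin (m + 1)) :=
  p.1.cycleRange⁻¹ * Equiv.Perm.decomposeFin.symm (0, p.2)

lemma succAbovePerm_zero (j : Fin (m + 1)) (τ : Equiv.Perm (Fin m)) :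
    succAbovePerm (j, τ) 0 = j := by
  simp [succAbovePerm, Equiv.Perm.inv_def]

lemma succAbovePerm_comp_succ (j : Fin (m + 1)) (τ : Equiv.Perm (Fin m)) :
    succAbovePerm (j, τ) ∘ Fin.succ = j.succAbove ∘ τ := by
  ext k
  simp [succAbovePerm, Equiv.Perm.inv_def, Equiv.Perm.decomposeFin_symm_apply_succ]

lemma sign_succAbovePerm (j : Fin (m + 1)) (τ : Equiv.Perm (Fin m)) :
    Equiv.Perm.sign (succAbovePerm (j, τ)) = (-1) ^ (j : ℕ) * Equiv.Perm.sign τ := by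
  simp [succAbovePerm, Equiv.Perm.decomposeFin.symm_sign, Fin.sign_cycleRange]

lemma succAbovePerm_bijective : Function.Bijective (succAbovePerm (m := m)) := by
  rw [Fintype.bijective_iff_injective_and_card]
  refine ⟨?_, by simp [Fintype.card_perm, Nat.factorial_succ]⟩
  rintro ⟨j, τ⟩ ⟨j', τ'⟩ h
  obtain rfl : j = j' := by rw [← succAbovePerm_zero j τ, ← succAbovePerm_zero j' τ', h]
  have hcomp := succAbovePerm_comp_succ j τ
  rw [h, succAbovePerm_comp_succ] at hcomp
  rw [Equiv.coe_inj.1 (Fin.succAbove_right_injective.comp_left hcomp)]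

/-- `cobound K h` is `faceSum h` on the simplices of `K`. -/
noncomputable def faceSum (h : (Fin m → V) → ℝ) (u : Fin (m + 1) → V) : ℝ :=
  ∑ j : Fin (m + 1), (-1 : ℝ) ^ (j : ℕ) * h (u ∘ j.succAbove)

/-- Alternating by construction; this is how `faceSum h` is seen to be alternating. -/
noncomputable def alternatizeTail (h : (Fin m → V) → ℝ) (u : Fin (m + 1) → V) : ℝ :=
  ∑ π : Equiv.Perm (Fin (m + 1)), ((Equiv.Perm.sign π : ℤ) : ℝ) * h (u ∘ π ∘ Fin.succ)

lemma alternatizeTail_eq_factorial_mul_faceSum {h : (Fin m → V) → ℝ} (hh : IsAlternating h)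
    (u : Fin (m + 1) → V) : alternatizeTail h u = m.factorial * faceSum h u := by
  rw [alternatizeTail, ← Fintype.sum_bijective _ succAbovePerm_bijective _ _ fun _ => rfl,
    Fintype.sum_prod_type, faceSum, mul_sum]
  refine sum_congr rfl fun j _ => ?_
  have hterm : ∀ τ : Equiv.Perm (Fin m),
      ((Equiv.Perm.sign (succAbovePerm (j, τ)) : ℤ) : ℝ) * h (u ∘ succAbovePerm (j, τ) ∘ Fin.succ)
        = (-1 : ℝ) ^ (j : ℕ) * h (u ∘ j.succAbove) := by
    intro τ
    rw [succAbovePerm_comp_succ, ← Function.comp_assoc, hh, sign_succAbovePerm]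
    push_cast
    linear_combination (-1 : ℝ) ^ (j : ℕ) * h (u ∘ j.succAbove) *
      Int.cast_units_mul_self (R := ℝ) (Equiv.Perm.sign τ)
  simp [hterm, Fintype.card_perm]

lemma alternatizeTail_comp_perm (h : (Fin m → V) → ℝ) (σ : Equiv.Perm (Fin (m + 1)))
    (u : Fin (m + 1) → V) :
    alternatizeTail h (u ∘ σ) = ((Equiv.Perm.sign σ : ℤ) : ℝ) * alternatizeTail h u := by
  rw [alternatizeTail, alternatizeTail, mul_sum]
  conv_rhs => rw [← Equiv.sum_comp (Equiv.mulLeft σ)]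
  refine sum_congr rfl fun π _ => ?_
  simp only [Equiv.coe_mulLeft, Equiv.Perm.coe_mul, Equiv.Perm.sign_mul, Units.val_mul,
    Int.cast_mul, Function.comp_assoc]
  linear_combination -((Equiv.Perm.sign π : ℤ) : ℝ) * h (u ∘ σ ∘ π ∘ Fin.succ) *
    Int.cast_units_mul_self (R := ℝ) (Equiv.Perm.sign σ)

lemma IsAlternating.faceSum {h : (Fin m → V) → ℝ} (hh : IsAlternating h) :
    IsAlternating (faceSum h) := by
  intro σ u
  have hfac : (m.factorial : ℝ) ≠ 0 := by positivity
  apply mul_left_cancel₀ hfac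
  rw [← alternatizeTail_eq_factorial_mul_faceSum hh, alternatizeTail_comp_perm,
    alternatizeTail_eq_factorial_mul_faceSum hh]
  ring

end Alternating

section Rho
variable [DecidableEq V] {m : ℕ}

lemma IsAlternating.rho {h : (Fin m → V) → ℝ} (hh : IsAlternating h) (v : V) :
    IsAlternating (rho v h) := by
  intro σ t
  have hmem : (∃ j, (t ∘ σ) j = v) ↔ ∃ j, t j = v :=
    ⟨fun ⟨j, hj⟩ => ⟨σ j, hj⟩, fun ⟨j, hj⟩ => ⟨σ.symm j, by simpa using hj⟩⟩
  simp only [_root_.rho, hmem]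
  split_ifs
  exacts [hh σ t, (mul_zero _).symm]

lemma rho_apply_of_apply_eq {h : (Fin m → V) → ℝ} {v : V} {t : Fin m → V} {j : Fin m}
    (hj : t j = v) : rho v h t = h t :=
  if_pos ⟨j, hj⟩

lemma rho_cons_self {h : (Fin (m + 1) → V) → ℝ} (v : V) (s : Fin m → V) :
    rho v h (Fin.cons v s) = h (Fin.cons v s) :=
  rho_apply_of_apply_eq (j := 0) rfl

end Rho

section Cochains
variable [DecidableEq V] [Fintype V] {K : Finset (Finset V)}

lemma allowed_comp_perm_iff {m : ℕ} (σ : Equiv.Perm (Fin m)) (t : Fin m → V) :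
    Allowed K (t ∘ σ) ↔ Allowed K t := by
  rw [Allowed, Allowed, image_univ_comp_perm, Equiv.injective_comp]

lemma Allowed.mono {L : Finset (Finset V)} (hKL : K ⊆ L) {m : ℕ} {t : Fin m → V}
    (ht : Allowed K t) : Allowed L t :=
  ⟨ht.1, hKL ht.2⟩

variable {m : ℕ}

lemma IsCochain.isAlternating {f : (Fin m → V) → ℝ} (hf : IsCochain K m f) : IsAlternating f :=
  hf.1

lemma IsAlternating.cobound {h : (Fin m → V) → ℝ} (hh : IsAlternating h) :
    IsAlternating (cobound K h) := by
  intro σ u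
  simp only [_root_.cobound, allowed_comp_perm_iff]
  split_ifs
  · exact hh.faceSum σ u
  · rw [mul_zero]

lemma IsAlternating.codiff {n : ℕ} {F : (Fin (m + 1) → V) → ℝ} (hF : IsAlternating F) :
    IsAlternating (codiff K n F) := by
  intro σ s
  simp only [_root_.codiff, mul_sum]
  refine sum_congr rfl fun x _ => ?_
  rw [← cons_comp_decomposeFin_symm_zero, allowed_comp_perm_iff, image_univ_comp_perm,
    image_univ_comp_perm, hF, sign_decomposeFin_symm_zero]
  split_ifs <;> ring

lemma IsAlternating.lap {n : ℕ} {h : (Fin m → V) → ℝ} (hh : IsAlternating h) :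
    IsAlternating (lap K n h) :=
  hh.cobound.codiff

lemma rho_apply_eq_zero {f : (Fin m → V) → ℝ} (hf : IsCochain K m f) {v : V} {t : Fin m → V}
    (ht : ¬(Allowed K t ∧ ∃ j, t j = v)) : rho v f t = 0 := by
  unfold rho
  split_ifs with hv
  exacts [hf.2 t fun hA => ht ⟨hA, hv⟩, rfl]

end Cochains

section Link
variable [DecidableEq V] {K : Finset (Finset V)} {v : V}

lemma mem_linkK {s : Finset V} : s ∈ linkK K v ↔ s ∈ K ∧ v ∉ s ∧ insert v s ∈ K :=
  mem_filter

lemma wt_insert_eq_wt_linkK (hK : IsComplex K) {A : Finset V} (hvA : v ∉ A) (n : ℕ) :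
    wt K (n + 1) (insert v A) = wt (linkK K v) n A := by
  refine card_nbij' (·.erase v) (insert v) (fun t ht => ?_) (fun u hu => ?_)
    (fun t ht => ?_) (fun u hu => ?_)
  · simp only [coe_filter, Set.mem_ofPred_eq, mem_linkK] at ht ⊢
    obtain ⟨htK, hAt, hcard⟩ := ht
    have hvt : v ∈ t := (insert_subset_iff.1 hAt).1
    have hcard' : (t.erase v).card = n + 1 := by rw [card_erase_of_mem hvt, hcard]; rfl
    refine ⟨⟨hK.2 t htK _ (erase_subset v t) (card_pos.1 (by omega)), notMem_erase v t,
      by rwa [insert_erase hvt]⟩, ?_, hcard'⟩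
    simpa [erase_insert hvA] using erase_subset_erase v hAt
  · simp only [coe_filter, Set.mem_ofPred_eq, mem_linkK] at hu ⊢
    obtain ⟨⟨-, hvu, huK⟩, hAu, hcard⟩ := hu
    exact ⟨huK, insert_subset_insert v hAu, by rw [card_insert_of_notMem hvu, hcard]⟩
  · simp only [coe_filter, Set.mem_ofPred_eq] at ht
    exact insert_erase (insert_subset_iff.1 ht.2.1).1
  · simp only [coe_filter, Set.mem_ofPred_eq, mem_linkK] at hu
    exact erase_insert hu.1.2.1

variable [Fintype V]

lemma allowed_cons_iff_allowed_linkK (hK : IsComplex K) {m : ℕ} (w : Fin (m + 1) → V) :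
    Allowed K (Fin.cons v w) ↔ Allowed (linkK K v) w := by
  have hface : insert v (image w univ) ∈ K → image w univ ∈ K := fun h =>
    hK.2 _ h _ (subset_insert _ _) (univ_nonempty.image w)
  simp only [Allowed, image_univ_cons, Fin.cons_injective_iff, mem_linkK, mem_image, mem_univ,
    true_and, Set.mem_range]
  tauto

lemma allowed_cons_cons_iff (hK : IsComplex K) {m : ℕ} (x : V) (s : Fin (m + 1) → V) :
    Allowed K (Fin.cons x (Fin.cons v s)) ↔ Allowed (linkK K v) (Fin.cons x s) := by
  rw [← cons_cons_comp_swap v x, allowed_comp_perm_iff, allowed_cons_iff_allowed_linkK hK]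

lemma not_exists_apply_eq_of_allowed_linkK {m : ℕ} {t : Fin m → V}
    (ht : Allowed (linkK K v) t) : ¬∃ j, t j = v :=
  fun ⟨j, hj⟩ => (mem_linkK.1 ht.2).2.1 (mem_image.2 ⟨j, mem_univ _, hj⟩)

variable {m : ℕ} {f : (Fin (m + 2) → V) → ℝ}

lemma IsCochain.tau_apply (hK : IsComplex K) (hf : IsCochain K (m + 2) f) (v : V)
    (s : Fin (m + 1) → V) : tau K v f s = f (Fin.cons v s) := by
  unfold tau
  split_ifs with hs
  · rfl
  · exact (hf.2 _ ((allowed_cons_iff_allowed_linkK hK s).not.2 hs)).symm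

lemma IsCochain.tau (hK : IsComplex K) (hf : IsCochain K (m + 2) f) (v : V) :
    IsCochain (linkK K v) (m + 1) (tau K v f) := by
  refine ⟨fun σ s => ?_, fun s hs => if_neg hs⟩
  rw [hf.tau_apply hK, hf.tau_apply hK, ← cons_comp_decomposeFin_symm_zero, hf.isAlternating,
    sign_decomposeFin_symm_zero]

lemma cobound_rho_cons_cons (hK : IsComplex K) (hf : IsCochain K (m + 2) f) (x : V)
    (s : Fin (m + 1) → V) (hA : Allowed K (Fin.cons x (Fin.cons v s))) :
    cobound K (rho v f) (Fin.cons x (Fin.cons v s))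
      = cobound (linkK K v) (tau K v f) (Fin.cons x s) := by
  have hxs := (allowed_cons_cons_iff hK x s).1 hA
  have hvs : rho v f (Fin.cons v s) = tau K v f s := by
    rw [rho_cons_self, hf.tau_apply hK]
  have hxs0 : rho v f (Fin.cons x s) = 0 := if_neg (not_exists_apply_eq_of_allowed_linkK hxs)
  have hxv (r : Fin m → V) :
      rho v f (Fin.cons x (Fin.cons v r)) = -tau K v f (Fin.cons x r) := by
    rw [rho_apply_of_apply_eq (v := v) (t := Fin.cons x (Fin.cons v r)) (j := 1) rfl,
      hf.isAlternating.apply_cons_cons_swap, hf.tau_apply hK]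
  have hrem (k : Fin (m + 1)) : Fin.removeNth k.succ (Fin.cons v s : Fin (m + 2) → V)
      = (Fin.cons v (Fin.removeNth k s) : Fin (m + 1) → V) :=
    Fin.cons_comp_succ_succAbove v s k
  simp only [_root_.cobound, if_pos hA, if_pos hxs]
  conv_lhs => rw [Fin.sum_univ_succ, Fin.sum_univ_succ]
  conv_rhs => rw [Fin.sum_univ_succ]
  simp only [Fin.succAbove_zero, Fin.cons_comp_succ, Fin.cons_comp_succ_succAbove,
    Fin.removeNth_zero, Fin.tail_cons, hrem, hvs, hxs0, hxv, Fin.val_zero, Fin.val_succ]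
  rw [mul_zero, zero_add]
  exact congrArg _ (sum_congr rfl fun k _ => by ring)

lemma lap_rho_cons (hK : IsComplex K) (hf : IsCochain K (m + 2) f) (n : ℕ)
    (s : Fin (m + 1) → V) :
    lap K (n + 1) (rho v f) (Fin.cons v s) = lap (linkK K v) n (tau K v f) s := by
  refine sum_congr rfl fun x _ => ?_
  by_cases hA : Allowed K (Fin.cons x (Fin.cons v s))
  · have hxs := (allowed_cons_cons_iff hK x s).1 hA
    have hs : Allowed (linkK K v) s := (allowed_cons_iff_allowed_linkK hK s).1
      (((allowed_cons_iff_allowed_linkK hK _).1 hA).mono (filter_subset _ _))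
    have hnum : wt K (n + 1) (image (Fin.cons x (Fin.cons v s)) univ)
        = wt (linkK K v) n (image (Fin.cons x s) univ) := by
      rw [image_univ_cons, image_univ_cons, insert_comm, ← image_univ_cons,
        wt_insert_eq_wt_linkK hK (mem_linkK.1 hxs.2).2.1]
    have hden : wt K (n + 1) (image (Fin.cons v s) univ) = wt (linkK K v) n (image s univ) := by
      rw [image_univ_cons, wt_insert_eq_wt_linkK hK (mem_linkK.1 hs.2).2.1]
    rw [if_pos hA, if_pos hxs, hnum, hden, cobound_rho_cons_cons hK hf x s hA]
  · rw [if_neg hA, if_neg ((allowed_cons_cons_iff hK x s).not.1 hA)]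

end Link

lemma sum_eq_mul_sum_cons [Fintype V] [DecidableEq V] {m : ℕ} (v : V)
    {F : (Fin (m + 1) → V) → ℝ} (hF : ∀ t, ¬(Function.Injective t ∧ ∃ j, t j = v) → F t = 0)
    (hperm : ∀ (σ : Equiv.Perm (Fin (m + 1))) t, F (t ∘ σ) = F t) :
    ∑ t, F t = (m + 1) * ∑ s : Fin m → V, F (Fin.cons v s) := by
  have hsplit (t : Fin (m + 1) → V) : F t = ∑ j, if t j = v then F t else 0 := by
    by_cases h : Function.Injective t ∧ ∃ j, t j = v
    · obtain ⟨hinj, j, hj⟩ := h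
      rw [sum_eq_single j (fun k _ hk => if_neg fun hk' => hk (hinj (hk'.trans hj.symm)))
        (by simp), if_pos hj]
    · simp [hF t h]
  have hslice (j : Fin (m + 1)) :
      ∑ t : Fin (m + 1) → V, (if t j = v then F t else 0) = ∑ s, F (Fin.cons v s) := by
    rw [← (Fin.insertNthEquiv (fun _ => V) j).sum_comp, Fintype.sum_prod_type]
    simp only [Fin.insertNthEquiv, Equiv.coe_fn_mk, Fin.insertNth_apply_same, sum_ite_irrel,
      sum_const_zero, sum_ite_eq', mem_univ, ↓reduceIte]
    exact sum_congr rfl fun s _ => by rw [← Fin.insertNth_comp_cycleRange_symm j v s, hperm]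
  calc ∑ t, F t = ∑ t, ∑ j, if t j = v then F t else 0 := sum_congr rfl fun t _ => hsplit t
    _ = ∑ j, ∑ t, if t j = v then F t else 0 := sum_comm
    _ = (m + 1) * ∑ s : Fin m → V, F (Fin.cons v s) := by simp [hslice]

section InnerProduct
variable [DecidableEq V] [Fintype V] {K : Finset (Finset V)}

lemma innerC_comm (n m : ℕ) (f g : (Fin m → V) → ℝ) : innerC K n m f g = innerC K n m g f := by
  unfold innerC
  congr 1
  exact sum_congr rfl fun _ _ => mul_right_comm _ _ _

variable {m : ℕ} {v : V}

lemma innerC_eq_innerC_linkK (hK : IsComplex K) (n : ℕ) {A B : (Fin (m + 2) → V) → ℝ}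
    {A' B' : (Fin (m + 1) → V) → ℝ} (hA : IsAlternating A) (hB : IsAlternating B)
    (hBv : ∀ t, ¬(Allowed K t ∧ ∃ j, t j = v) → B t = 0)
    (hA' : ∀ s, A (Fin.cons v s) = A' s) (hB' : ∀ s, B (Fin.cons v s) = B' s) :
    innerC K (n + 1) (m + 2) A B = innerC (linkK K v) n (m + 1) A' B' := by
  have hsum := sum_eq_mul_sum_cons v (F := fun t => (wt K (n + 1) (image t univ) : ℝ) * A t * B t)
    (fun t ht => by rw [hBv t fun h => ht ⟨h.1.1, h.2⟩, mul_zero])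
    (fun σ t => by simp only [image_univ_comp_perm, mul_assoc, hA.mul_comp_perm hB])
  have hterm (s : Fin (m + 1) → V) :
      (wt K (n + 1) (image (Fin.cons v s) univ) : ℝ) * A (Fin.cons v s) * B (Fin.cons v s)
        = wt (linkK K v) n (image s univ) * A' s * B' s := by
    by_cases hs : Allowed (linkK K v) s
    · rw [hA', hB', image_univ_cons, wt_insert_eq_wt_linkK hK (mem_linkK.1 hs.2).2.1]
    · have hB0 : B (Fin.cons v s) = 0 :=
        hBv _ fun h => hs ((allowed_cons_iff_allowed_linkK hK s).1 h.1)
      rw [← hB', hB0, mul_zero, mul_zero]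
  rw [innerC, innerC, hsum, sum_congr rfl fun s _ => hterm s, Nat.factorial_succ (m + 1)]
  push_cast
  field_simp

variable {f : (Fin (m + 2) → V) → ℝ}

lemma innerC_lap_rho_eq (hK : IsComplex K) (hf : IsCochain K (m + 2) f) (n : ℕ) :
    innerC K (n + 1) (m + 2) (lap K (n + 1) (rho v f)) (rho v f)
      = innerC (linkK K v) n (m + 1) (lap (linkK K v) n (tau K v f)) (tau K v f) :=
  innerC_eq_innerC_linkK hK n (hf.isAlternating.rho v).lap (hf.isAlternating.rho v)
    (fun _ => rho_apply_eq_zero hf) (lap_rho_cons hK hf n)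
    (fun s => by rw [rho_cons_self, hf.tau_apply hK])

lemma innerC_rho_eq (hK : IsComplex K) (hf : IsCochain K (m + 2) f) (n : ℕ) :
    innerC K (n + 1) (m + 2) (rho v f) f
      = innerC (linkK K v) n (m + 1) (tau K v f) (tau K v f) := by
  rw [innerC_comm]
  exact innerC_eq_innerC_linkK hK n hf.isAlternating (hf.isAlternating.rho v)
    (fun _ => rho_apply_eq_zero hf) (fun s => (hf.tau_apply hK v s).symm)
    (fun s => by rw [rho_cons_self, hf.tau_apply hK])

end InnerProduct

theorem local_rayleigh_bound_general
    [Fintype V] [DecidableEq V] (K : Finset (Finset V)) (n i : ℕ)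
    (hcplx : IsComplex K) (hi1 : 1 ≤ i) (hin : i + 1 ≤ n)
    (lam : ℝ)
    (hlam : ∀ u ∈ verts K, ∀ g : (Fin i → V) → ℝ, IsCochain (linkK K u) i g →
      innerC (linkK K u) (n - 1) i (lap (linkK K u) (n - 1) g) g
        ≤ lam * innerC (linkK K u) (n - 1) i g g)
    (f : (Fin (i + 1) → V) → ℝ) (hf : IsCochain K (i + 1) f)
    (v : V) (hv : v ∈ verts K) :
    innerC K n (i + 1) (lap K n (rho v f)) (rho v f)
      ≤ lam * innerC K n (i + 1) (rho v f) f := by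
  obtain ⟨i, rfl⟩ : ∃ k, i = k + 1 := ⟨i - 1, by omega⟩
  obtain ⟨n, rfl⟩ : ∃ k, n = k + 1 := ⟨n - 1, by omega⟩
  rw [innerC_lap_rho_eq hcplx hf, innerC_rho_eq hcplx hf]
  exact hlam v hv _ (hf.tau hcplx v)

/-- if `λ` bounds all the local Rayleigh quotients, i.e.
`(Δ_u g, g)_u ≤ λ·(g,g)_u` for every vertex `u` of `X` and `g ∈ C^{i-1}(Lk(u))`,
then `(Δρ_v f, ρ_v f) ≤ λ·(ρ_v f, f)` for every `f ∈ C^i(X)` and vertex `v` of `X`. -/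
theorem local_rayleigh_bound
    [Fintype V] [DecidableEq V] (K : Finset (Finset V)) (n i : ℕ)
    (hcplx : IsComplex K) (hpure : IsPureDim K n) (hi1 : 1 ≤ i) (hin : i + 1 ≤ n)
    (lam : ℝ)
    (hlam : ∀ u ∈ verts K, ∀ g : (Fin i → V) → ℝ, IsCochain (linkK K u) i g →
      innerC (linkK K u) (n - 1) i (lap (linkK K u) (n - 1) g) g
        ≤ lam * innerC (linkK K u) (n - 1) i g g)
    (f : (Fin (i + 1) → V) → ℝ) (hf : IsCochain K (i + 1) f)
    (v : V) (hv : v ∈ verts K) :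
    innerC K n (i + 1) (lap K n (rho v f)) (rho v f)
      ≤ lam * innerC K n (i + 1) (rho v f) f :=
  local_rayleigh_bound_general K n i hcplx hi1 hin lam hlam f hf v hv
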